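/- Let $X$ be a locally compact Hausdorff space, $E$ a normed space, and $A$ a completely regular subspace of $C_0(X,E)$. If $S$ and $R$ are T-sets in $E$ and $x, z \in X$ are points with $(S,x) \cap (R,z) \cap A = \{0\}$, then $x = z$ and $S \cap R = \{0\}$. -/

import Mathlib

open scoped ZeroAtInfty

def NormAdditive {E : Type*} [NormedAddCommGroup E] (S : Set E) : Prop :=
  ∀ l : List E, (∀ e ∈ l, e ∈ S) → ‖l.sum‖ = (l.map fun e => ‖e‖).sum

def IsTSet {E : Type*} [NormedAddCommGroup E] (S : Set E) : Prop :=
  NormAdditive S ∧ ∀ R : Set E, NormAdditive R → S ⊆ R → R = S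

/-- The set `(S, x)` of functions attaining their norm at `x` with value in `S`. -/
def TSetAt {X : Type*} [TopologicalSpace X] {E : Type*} [NormedAddCommGroup E]
    (S : Set E) (x : X) : Set C₀(X, E) := {f | f x ∈ S ∧ ‖f‖ = ‖f x‖}


/-- `A` is completely regular. -/
def CompletelyRegularSubspace {X : Type*} [TopologicalSpace X] {E : Type*}
    [NormedAddCommGroup E] (A : Set C₀(X, E)) : Prop :=
  ∀ (x : X) (u : E), ∀ U ∈ nhds x, ∃ f ∈ A, f x = u ∧ ‖f‖ = ‖u‖ ∧ ∀ z ∉ U, f z = 0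

/-!
If `x ≠ z`, glue two peaking functions with disjoint supports, one taking a value `u ∈ S \ {0}`
at `x`, the other a value in `R` of the same norm at `z`; the sum lies in `(S,x) ∩ (R,z) ∩ A`
and is nonzero. If `x = z`, a peaking function at `x` with value `w ∈ S ∩ R` lies in the
intersection, so `w = 0`. The T-set facts this needs (a nonzero element, closure under
nonnegative scaling) come from maximality: adjoining a suitable vector keeps the set norm
additive.
-/

lemma norm_add_smul_of_le {E : Type*} [NormedAddCommGroup E] [NormedSpace ℝ E]
    {a u : E} {s r : ℝ} (hs : 0 ≤ s) (hsr : s ≤ r) (hr : ‖a + r • u‖ = ‖a‖ + r * ‖u‖) :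
    ‖a + s • u‖ = ‖a‖ + s * ‖u‖ := by
  have upper : ‖a + s • u‖ ≤ ‖a‖ + s * ‖u‖ := by
    simpa [norm_smul, abs_of_nonneg hs] using norm_add_le a (s • u)
  have lower : ‖a + r • u‖ ≤ ‖a + s • u‖ + (r - s) * ‖u‖ := by
    calc ‖a + r • u‖ = ‖(a + s • u) + (r - s) • u‖ := by rw [add_assoc, ← add_smul]; ring_nf
    _ ≤ ‖a + s • u‖ + (r - s) * ‖u‖ := by
        simpa [norm_smul, abs_of_nonneg (sub_nonneg.2 hsr)] using
          norm_add_le (a + s • u) ((r - s) • u)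
  linarith

section NormAdditive

variable {E : Type*} [NormedAddCommGroup E]

lemma NormAdditive.norm_sum_add_nsmul {S : Set E} (hS : NormAdditive S) {u : E} (hu : u ∈ S)
    {l : List E} (hl : ∀ e ∈ l, e ∈ S) (n : ℕ) :
    ‖l.sum + n • u‖ = (l.map fun e => ‖e‖).sum + n * ‖u‖ := by
  have hmem : ∀ e ∈ l ++ List.replicate n u, e ∈ S := by
    intro e he
    rcases List.mem_append.mp he with he | he
    · exact hl e he
    · rw [List.eq_of_mem_replicate he]; exact hu
  simpa [List.sum_replicate] using hS _ hmem

/-- A list in `S ∪ {w}` splits into a list in `S` and `n` copies of `w`, so it suffices to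
check norm additivity on `l.sum + n • w`. -/
lemma normAdditive_union_singleton {S : Set E} {w : E}
    (h : ∀ l : List E, (∀ e ∈ l, e ∈ S) → ∀ n : ℕ,
      ‖l.sum + n • w‖ = (l.map fun e => ‖e‖).sum + n * ‖w‖) :
    NormAdditive (S ∪ {w}) := by
  classical
  intro l hl
  have hperm := List.filter_append_perm (fun e => decide (e ∈ S)) l
  set l₁ := l.filter (fun e => decide (e ∈ S))
  set l₂ := l.filter (fun e => !decide (e ∈ S))
  have hl₁ : ∀ e ∈ l₁, e ∈ S := fun e he => by simpa using List.of_mem_filter he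
  have hl₂ : l₂ = List.replicate l₂.length w := by
    refine List.eq_replicate_of_mem fun e he => ?_
    have heS : e ∉ S := by simpa using List.of_mem_filter he
    simpa [heS] using hl e (List.mem_of_mem_filter he)
  rw [← hperm.sum_eq, ← (hperm.map _).sum_eq, List.map_append, List.sum_append,
    List.sum_append, hl₂, List.map_replicate, List.sum_replicate, List.sum_replicate,
    h l₁ hl₁, nsmul_eq_mul]

lemma IsTSet.mem_of_normAdditive_union {S : Set E} (hS : IsTSet S) {w : E}
    (hw : NormAdditive (S ∪ {w})) : w ∈ S := by
  rw [← hS.2 _ hw Set.subset_union_left]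
  exact Or.inr rfl

lemma IsTSet.smul_mem [NormedSpace ℝ E] {S : Set E} (hS : IsTSet S) {u : E} (hu : u ∈ S)
    {t : ℝ} (ht : 0 ≤ t) : t • u ∈ S := by
  refine hS.mem_of_normAdditive_union (normAdditive_union_singleton fun l hl n => ?_)
  -- `n • t • u` lies on the segment from `0` to `⌈n t⌉ • u`, along which the norm is additive
  have hr := hS.1.norm_sum_add_nsmul hu hl ⌈(n : ℝ) * t⌉₊
  rw [← Nat.cast_smul_eq_nsmul ℝ, ← hS.1 l hl] at hr
  rw [← Nat.cast_smul_eq_nsmul ℝ, smul_smul, ← hS.1 l hl,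
    norm_add_smul_of_le (by positivity) (Nat.le_ceil _) hr, norm_smul, Real.norm_of_nonneg ht]
  ring

lemma IsTSet.zero_mem [NormedSpace ℝ E] {S : Set E} (hS : IsTSet S) (hne : S.Nonempty) :
    (0 : E) ∈ S := by
  obtain ⟨u, hu⟩ := hne
  simpa using hS.smul_mem hu le_rfl

/-- If `S ⊆ {0}`, then `S ∪ {v}` is still norm additive for any `v`, so maximality puts `v`
in `S`. -/
lemma IsTSet.exists_ne_zero [NormedSpace ℝ E] [Nontrivial E] {S : Set E} (hS : IsTSet S) :
    ∃ u ∈ S, u ≠ 0 := by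
  by_contra! hS0
  obtain ⟨v, hv⟩ := exists_ne (0 : E)
  refine hv (hS0 v (hS.mem_of_normAdditive_union (normAdditive_union_singleton ?_)))
  intro l hl n
  have hl0 : l = List.replicate l.length 0 := List.eq_replicate_of_mem fun e he => hS0 e (hl e he)
  rw [hl0]
  simp [List.sum_replicate, ← Nat.cast_smul_eq_nsmul ℝ, norm_smul]

end NormAdditive

namespace ZeroAtInftyContinuousMap

variable {X : Type*} [TopologicalSpace X] {E : Type*} [NormedAddCommGroup E]

lemma norm_apply_le (f : C₀(X, E)) (y : X) : ‖f y‖ ≤ ‖f‖ :=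
  norm_toBCF_eq_norm (f := f) ▸ f.toBCF.norm_coe_le_norm y

lemma norm_le_of_forall_le (f : C₀(X, E)) {C : ℝ} (hC : 0 ≤ C) (hf : ∀ y, ‖f y‖ ≤ C) :
    ‖f‖ ≤ C :=
  norm_toBCF_eq_norm (f := f) ▸ (BoundedContinuousFunction.norm_le hC).mpr hf

end ZeroAtInftyContinuousMap

lemma CompletelyRegularSubspace.exists_apply_eq_apply_eq {X : Type*} [TopologicalSpace X]
    [T2Space X] {E : Type*} [NormedAddCommGroup E] {A : AddSubmonoid C₀(X, E)}
    (hA : CompletelyRegularSubspace (A : Set C₀(X, E))) {x z : X} (hxz : x ≠ z) {u v : E}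
    (huv : ‖u‖ = ‖v‖) : ∃ f ∈ A, f x = u ∧ f z = v ∧ ‖f‖ = ‖u‖ := by
  obtain ⟨U, V, hU, hV, hxU, hzV, hUV⟩ := t2_separation hxz
  obtain ⟨f, hfA, hfx, hfn, hf0⟩ := hA x u U (hU.mem_nhds hxU)
  obtain ⟨g, hgA, hgz, hgn, hg0⟩ := hA z v V (hV.mem_nhds hzV)
  have hfgx : (f + g) x = u := by simp [hfx, hg0 x (hUV.notMem_of_mem_left hxU)]
  have hfgz : (f + g) z = v := by simp [hgz, hf0 z (hUV.notMem_of_mem_right hzV)]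
  have hbound : ∀ y, ‖(f + g) y‖ ≤ ‖u‖ := by
    intro y
    by_cases hyU : y ∈ U
    · simpa [hg0 y (hUV.notMem_of_mem_left hyU), hfn] using f.norm_apply_le y
    · simpa [hf0 y hyU, hgn, huv] using g.norm_apply_le y
  refine ⟨f + g, A.add_mem hfA hgA, hfgx, hfgz, le_antisymm ?_ ?_⟩
  · exact (f + g).norm_le_of_forall_le (norm_nonneg u) hbound
  · simpa [hfgx] using (f + g).norm_apply_le x

theorem eq_point_and_trivial_intersection_general {X : Type*} [TopologicalSpace X]
    [T2Space X] {E : Type*} [NormedAddCommGroup E]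
    [NormedSpace ℝ E] [Nontrivial E] (A : Submodule ℝ C₀(X, E))
    (hA : CompletelyRegularSubspace (A : Set C₀(X, E)))
    (S R : Set E) (hS : IsTSet S) (hR : IsTSet R) (x z : X)
    (h : TSetAt S x ∩ TSetAt R z ∩ A = {0}) :
    x = z ∧ S ∩ R = {0} := by
  have apply_eq_zero : ∀ f ∈ TSetAt S x ∩ TSetAt R z ∩ A, f x = 0 := by
    intro f hf
    rw [h] at hf
    rw [Set.mem_singleton_iff.mp hf]
    rfl
  obtain ⟨u, huS, hu0⟩ := hS.exists_ne_zero
  obtain ⟨v, hvR, hv0⟩ := hR.exists_ne_zero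
  have hxz : x = z := by
    by_contra hxz
    have hv' : ‖u‖ = ‖(‖u‖ / ‖v‖) • v‖ := by
      rw [norm_smul, norm_div, norm_norm, norm_norm, div_mul_cancel₀ _ (norm_ne_zero_iff.2 hv0)]
    obtain ⟨f, hfA, hfx, hfz, hfn⟩ := hA.exists_apply_eq_apply_eq (A := A.toAddSubmonoid) hxz hv'
    refine hu0 (hfx ▸ apply_eq_zero f ⟨⟨⟨?_, ?_⟩, ?_, ?_⟩, hfA⟩)
    · exact hfx ▸ huS
    · rw [hfn, hfx]
    · exact hfz ▸ hR.smul_mem hvR (by positivity)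
    · rw [hfn, hfz]
      exact hv'
  subst hxz
  refine ⟨rfl, Set.eq_singleton_iff_unique_mem.mpr ⟨⟨hS.zero_mem ⟨u, huS⟩, hR.zero_mem ⟨v, hvR⟩⟩,
    fun w hw => ?_⟩⟩
  obtain ⟨f, hfA, hfx, hfn, -⟩ := hA x w Set.univ Filter.univ_mem
  rw [← hfx]
  exact apply_eq_zero f ⟨⟨⟨hfx ▸ hw.1, hfx ▸ hfn⟩, hfx ▸ hw.2, hfx ▸ hfn⟩, hfA⟩

theorem eq_point_and_trivial_intersection {X : Type*} [TopologicalSpace X]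
    [LocallyCompactSpace X] [T2Space X] {E : Type*} [NormedAddCommGroup E]
    [NormedSpace ℝ E] [Nontrivial E] (A : Submodule ℝ C₀(X, E))
    (hA : CompletelyRegularSubspace (A : Set C₀(X, E)))
    (S R : Set E) (hS : IsTSet S) (hR : IsTSet R) (x z : X)
    (h : TSetAt S x ∩ TSetAt R z ∩ A = {0}) :
    x = z ∧ S ∩ R = {0} :=
  eq_point_and_trivial_intersection_general A hA S R hS hR x z h
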